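/- arXiv:1005.4470 — 2 statements merged into one kernel-verified Lean document; each statement's English description precedes it below -/
import Mathlib

section
/- Define a function c on finite graphs by the recursion: c(G) = 0 if some edge of G is a bridge; c(G) = −c(G∖e) if e is a non-bridge edge of G; c(G) = 1 if G has no edges. Then c is well-defined and for every graph G, c(G) = 0 if G has an edge that is not a looping edge, and c(G) = (−1)^n if G consists of n looping edges (and isolated vertices) only. -/
open scoped Classical

/-- A finite multigraph: finite vertex and edge types, each edge assigned an
unordered pair of endpoints (allowing loops and parallel edges). -/
structure Multigraph where
  V : Type
  E : Type
  [fintypeV : Fintype V]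
  [fintypeE : Fintype E]
  ends : E → Sym2 V

namespace Multigraph

attribute [instance] fintypeV fintypeE

variable (G : Multigraph)

/-- `a` and `b` are joined by a walk using only edges in `S`. -/
def Reach (S : Set G.E) (a b : G.V) : Prop :=
  Relation.ReflTransGen (fun x y => ∃ e ∈ S, G.ends e = s(x, y)) a b

/-- `G` is connected. -/
def Connected : Prop := ∀ a b : G.V, G.Reach Set.univ a b

/-- A looping edge: both endpoints coincide. -/
def IsLoop (e : G.E) : Prop := (G.ends e).IsDiag

/-- A bridge: its endpoints cannot be joined avoiding the edge itself
(so that deleting it disconnects its component). -/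
def IsBridge (e : G.E) : Prop :=
  ∀ a b : G.V, G.ends e = s(a, b) → ¬ G.Reach {e' | e' ≠ e} a b

/-- A spanning forest: an acyclic edge set realizing the connectivity of `G`
(equivalently, a choice of spanning tree in each connected component). -/
def IsSpanningForest (S : Finset G.E) : Prop :=
  (∀ e ∈ S, ∀ a b : G.V, G.ends e = s(a, b) → ¬ G.Reach (↑S \ {e} : Set G.E) a b) ∧
  (∀ a b : G.V, G.Reach Set.univ a b → G.Reach (↑S : Set G.E) a b)

/-- The graph (Kirchhoff–Symanzik) polynomial
`ψ_G = ∑_{T spanning forest} ∏_{e ∉ T} t_e`. -/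
noncomputable def psi : MvPolynomial G.E ℤ :=
  ∑ S : Finset G.E, if G.IsSpanningForest S then
    ∏ e : G.E, (if e ∈ S then 1 else MvPolynomial.X e) else 0

/-- Deletion of an edge. -/
noncomputable def delete (e : G.E) : Multigraph where
  V := G.V
  E := {e' : G.E // e' ≠ e}
  fintypeE := Fintype.ofFinite _
  ends := fun e' => G.ends e'.1

/-- The setoid identifying the endpoints of `e`. -/
def contractSetoid (e : G.E) : Setoid G.V :=
  ⟨Relation.EqvGen (fun a b => G.ends e = s(a, b)), Relation.EqvGen.is_equivalence _⟩

/-- Contraction of an edge: identify its endpoints and remove the edge. -/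
noncomputable def contract (e : G.E) : Multigraph where
  V := Quotient (G.contractSetoid e)
  E := {e' : G.E // e' ≠ e}
  fintypeV := Fintype.ofFinite _
  fintypeE := Fintype.ofFinite _
  ends := fun e' => (G.ends e'.1).map (Quotient.mk (G.contractSetoid e))

/-- The setoid of connectivity in `G`. -/
def componentSetoid : Setoid G.V :=
  ⟨Relation.EqvGen (fun a b => ∃ e : G.E, G.ends e = s(a, b)), Relation.EqvGen.is_equivalence _⟩

/-- The number of connected components of `G`. -/
noncomputable def b0 : ℕ := Fintype.card (Quotient G.componentSetoid)

/-- Disjoint union of graphs. -/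
def disjUnion (G₁ G₂ : Multigraph) : Multigraph where
  V := G₁.V ⊕ G₂.V
  E := G₁.E ⊕ G₂.E
  ends := Sum.elim (fun e => (G₁.ends e).map Sum.inl) (fun e => (G₂.ends e).map Sum.inr)

end Multigraph

/-- The defining recursion for `c`: `c(G) = 0` if `G` has a bridge,
`c(G) = -c(G∖e)` for `e` a non-bridge edge, and `c(G) = 1` if `G` has no edges. -/
def SatisfiesRec (c : Multigraph → ℤ) : Prop :=
  (∀ G : Multigraph, (∃ e : G.E, G.IsBridge e) → c G = 0) ∧
  (∀ (G : Multigraph) (e : G.E), ¬ G.IsBridge e → c G = - c (G.delete e)) ∧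
  (∀ G : Multigraph, IsEmpty G.E → c G = 1)

/-!
A walk along loops never moves, so a loop is never a bridge, and a non-loop edge that is not a
bridge lies on a cycle, which contains a second non-loop edge. Hence deleting a non-bridge edge
neither creates nor destroys non-loop edges. The function that is `(-1)ⁿ` on graphs made of `n`
loops and `0` otherwise therefore satisfies the recursion, and any solution agrees with it by
induction on the number of edges.
-/

namespace Multigraph

variable {G : Multigraph}

theorem Reach.eq_of_forall_isLoop {S : Set G.E} (hS : ∀ e ∈ S, G.IsLoop e) {a b : G.V}
    (h : G.Reach S a b) : a = b := by
  induction h with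
  | refl => rfl
  | tail _ hstep ih =>
    obtain ⟨e, heS, hends⟩ := hstep
    have hloop := hS e heS
    rw [IsLoop, hends, Sym2.mk_isDiag_iff] at hloop
    exact ih.trans hloop

theorem IsLoop.not_isBridge {e : G.E} (h : G.IsLoop e) : ¬ G.IsBridge e := by
  obtain ⟨v, hv⟩ : ∃ v, G.ends e = s(v, v) := ⟨_, (Sym2.diag_diagElem h).symm⟩
  exact fun hb => hb v v hv Relation.ReflTransGen.refl

theorem exists_ne_not_isLoop_of_not_isBridge {e : G.E} (hloop : ¬ G.IsLoop e)
    (hbridge : ¬ G.IsBridge e) : ∃ f, f ≠ e ∧ ¬ G.IsLoop f := by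
  obtain ⟨a, b, hends, hreach⟩ : ∃ a b, G.ends e = s(a, b) ∧ G.Reach {f | f ≠ e} a b := by
    simpa [IsBridge] using hbridge
  by_contra! hall
  have hab : a = b := Reach.eq_of_forall_isLoop hall hreach
  exact hloop (by rw [IsLoop, hends, Sym2.mk_isDiag_iff, hab])

theorem card_delete (e : G.E) : Fintype.card (G.delete e).E + 1 = Fintype.card G.E := by
  have hcard : Fintype.card (G.delete e).E = Fintype.card G.E - 1 := by
    rw [← Set.card_ne_eq e]
    exact Fintype.card_congr (Equiv.refl _)
  have hpos : 0 < Fintype.card G.E := Fintype.card_pos_iff.mpr ⟨e⟩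
  omega

theorem forall_isLoop_delete_iff {e : G.E} (he : ¬ G.IsBridge e) :
    (∀ f, (G.delete e).IsLoop f) ↔ ∀ f, G.IsLoop f := by
  refine ⟨fun hall f => ?_, fun hall f => hall f.1⟩
  by_cases hfe : f = e
  · subst hfe
    by_contra hf
    obtain ⟨g, hge, hg⟩ := exists_ne_not_isLoop_of_not_isBridge hf he
    exact hg (hall ⟨g, hge⟩)
  · exact hall ⟨f, hfe⟩

variable (G) in
noncomputable def loopSign : ℤ :=
  if ∀ e, G.IsLoop e then (-1) ^ Fintype.card G.E else 0

theorem loopSign_of_exists_not_isLoop (h : ∃ e, ¬ G.IsLoop e) : G.loopSign = 0 := by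
  rw [loopSign, if_neg (not_forall.mpr h)]

theorem loopSign_of_forall_isLoop (h : ∀ e, G.IsLoop e) :
    G.loopSign = (-1) ^ Fintype.card G.E := by
  rw [loopSign, if_pos h]

theorem loopSign_of_isEmpty [IsEmpty G.E] : G.loopSign = 1 := by
  rw [loopSign_of_forall_isLoop isEmptyElim, Fintype.card_eq_zero, pow_zero]

theorem loopSign_of_isBridge {e : G.E} (he : G.IsBridge e) : G.loopSign = 0 :=
  loopSign_of_exists_not_isLoop ⟨e, fun hloop => hloop.not_isBridge he⟩

theorem loopSign_delete {e : G.E} (he : ¬ G.IsBridge e) :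
    G.loopSign = -(G.delete e).loopSign := by
  by_cases hall : ∀ f, G.IsLoop f
  · rw [loopSign_of_forall_isLoop hall,
      loopSign_of_forall_isLoop ((forall_isLoop_delete_iff he).mpr hall), ← card_delete e,
      pow_succ]
    ring
  · have hall' : ¬ ∀ f, (G.delete e).IsLoop f := by rwa [forall_isLoop_delete_iff he]
    rw [loopSign, loopSign, if_neg hall, if_neg hall', neg_zero]

end Multigraph

open Multigraph

theorem satisfiesRec_loopSign : SatisfiesRec loopSign :=
  ⟨fun _ ⟨_, he⟩ => loopSign_of_isBridge he, fun _ _ he => loopSign_delete he,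
    fun _ _ => loopSign_of_isEmpty⟩

theorem SatisfiesRec.eq_loopSign {c : Multigraph → ℤ} (hc : SatisfiesRec c) (G : Multigraph) :
    c G = G.loopSign := by
  induction hn : Fintype.card G.E generalizing G with
  | zero =>
    have : IsEmpty G.E := Fintype.card_eq_zero_iff.mp hn
    rw [hc.2.2 G inferInstance, loopSign_of_isEmpty]
  | succ n ih =>
    by_cases hbridge : ∃ e, G.IsBridge e
    · obtain ⟨e, he⟩ := hbridge
      rw [hc.1 G ⟨e, he⟩, loopSign_of_isBridge he]
    · obtain ⟨e⟩ : Nonempty G.E := Fintype.card_pos_iff.mp (by omega)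
      have he : ¬ G.IsBridge e := fun he => hbridge ⟨e, he⟩
      have hcard : Fintype.card (G.delete e).E = n := by have := card_delete e; omega
      rw [hc.2.1 G e he, ih _ hcard, loopSign_delete he]

/-- The recursion `c(G) = 0` if `G` has a bridge, `c(G) = -c(G∖e)` for a
non-bridge edge `e`, `c(∅) = 1` determines a well-defined function on graphs,
which vanishes on graphs with a non-looping edge and equals `(-1)ⁿ` on graphs
with exactly `n` edges, all of them loops. -/
theorem rec_welldefined_and_values :
    (∃ c : Multigraph → ℤ, SatisfiesRec c) ∧
    (∀ c : Multigraph → ℤ, SatisfiesRec c → ∀ G : Multigraph,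
      ((∃ e : G.E, ¬ G.IsLoop e) → c G = 0) ∧
      ((∀ e : G.E, G.IsLoop e) → c G = (-1) ^ Fintype.card G.E)) := by
  refine ⟨⟨loopSign, satisfiesRec_loopSign⟩, fun c hc G => ?_⟩
  rw [hc.eq_loopSign G]
  exact ⟨loopSign_of_exists_not_isLoop, loopSign_of_forall_isLoop⟩
end

section
/- Let G be a finite graph with at least one non-looping edge. Then by repeatedly deleting non-bridge edges one can reach a graph containing a bridge; consequently, any function c on graphs satisfying c(G)=0 when G has a bridge and c(G)=−c(G∖e) for e a non-bridge non-loop edge must satisfy c(G)=0. -/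
open scoped Classical

/-- One step of deleting a non-bridge edge. -/
def DelStep (G H : Multigraph) : Prop :=
  ∃ e : G.E, ¬ G.IsBridge e ∧ H = G.delete e

/-!
A non-loop edge `e = ab` that is not a bridge comes with a walk from `a` to `b` avoiding `e`;
since `a ≠ b`, that walk uses a non-loop edge, which survives in `G ∖ e`. So deleting non-bridge
non-loop edges preserves the hypothesis while the number of edges drops, and the process must
stop at a graph whose chosen non-loop edge is a bridge. Along the way `c` only changes sign, and
it vanishes at the end.
-/

namespace Multigraph

theorem exists_not_isLoop_of_reach (G : Multigraph) {S : Set G.E} {a b : G.V}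
    (h : G.Reach S a b) (hab : a ≠ b) : ∃ e ∈ S, ¬ G.IsLoop e := by
  induction h with
  | refl => exact absurd rfl hab
  | @tail x y _ hxy ih =>
    by_cases hxy' : x = y
    · exact ih (hxy' ▸ hab)
    · obtain ⟨e, heS, he⟩ := hxy
      exact ⟨e, heS, by rwa [IsLoop, he, Sym2.mk_isDiag_iff]⟩

theorem exists_not_isLoop_delete {G : Multigraph} {e : G.E} (hb : ¬ G.IsBridge e)
    (hl : ¬ G.IsLoop e) : ∃ e' : (G.delete e).E, ¬ (G.delete e).IsLoop e' := by
  simp only [IsBridge, not_forall, not_not] at hb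
  obtain ⟨a, b, hends, hreach⟩ := hb
  have hab : a ≠ b := by
    rintro rfl
    exact hl (by rw [IsLoop, hends, Sym2.mk_isDiag_iff])
  obtain ⟨e', hne, he'⟩ := G.exists_not_isLoop_of_reach hreach hab
  exact ⟨⟨e', hne⟩, he'⟩

theorem card_edge_delete_lt (G : Multigraph) (e : G.E) :
    Fintype.card (G.delete e).E < Fintype.card G.E :=
  Fintype.card_lt_of_injective_of_notMem Subtype.val Subtype.val_injective
    (by rintro ⟨⟨e₀, h₀⟩, rfl⟩; exact h₀ rfl)

theorem exists_reflTransGen_delStep_isBridge (G : Multigraph) (h : ∃ e : G.E, ¬ G.IsLoop e) :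
    ∃ H : Multigraph, Relation.ReflTransGen DelStep G H ∧ ∃ e : H.E, H.IsBridge e := by
  obtain ⟨e, hl⟩ := h
  by_cases hb : G.IsBridge e
  · exact ⟨G, .refl, e, hb⟩
  · obtain ⟨H, hGH, hH⟩ :=
      exists_reflTransGen_delStep_isBridge (G.delete e) (exists_not_isLoop_delete hb hl)
    exact ⟨H, .head ⟨e, hb, rfl⟩ hGH, hH⟩
termination_by Fintype.card G.E
decreasing_by exact G.card_edge_delete_lt e

theorem eq_zero_of_deletion_antisymm (c : Multigraph → ℤ)
    (hbridge : ∀ K : Multigraph, (∃ e : K.E, K.IsBridge e) → c K = 0)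
    (hdel : ∀ (K : Multigraph) (e : K.E), ¬ K.IsBridge e → ¬ K.IsLoop e →
      c K = - c (K.delete e))
    (G : Multigraph) (h : ∃ e : G.E, ¬ G.IsLoop e) : c G = 0 := by
  obtain ⟨e, hl⟩ := h
  by_cases hb : G.IsBridge e
  · exact hbridge G ⟨e, hb⟩
  · rw [hdel G e hb hl,
      eq_zero_of_deletion_antisymm c hbridge hdel (G.delete e) (exists_not_isLoop_delete hb hl),
      neg_zero]
termination_by Fintype.card G.E
decreasing_by exact G.card_edge_delete_lt e

end Multigraph

/-- If `G` has a non-looping edge, then by repeatedly deleting non-bridge edges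
one reaches a graph containing a bridge; consequently any function `c` with
`c = 0` on graphs with a bridge and `c(G) = -c(G∖e)` for `e` a non-bridge
non-loop edge satisfies `c(G) = 0`. -/
theorem delete_to_bridge_and_vanishing (G : Multigraph)
    (h : ∃ e : G.E, ¬ G.IsLoop e) :
    (∃ H : Multigraph, Relation.ReflTransGen DelStep G H ∧ ∃ e : H.E, H.IsBridge e) ∧
    (∀ c : Multigraph → ℤ,
      (∀ K : Multigraph, (∃ e : K.E, K.IsBridge e) → c K = 0) →
      (∀ (K : Multigraph) (e : K.E), ¬ K.IsBridge e → ¬ K.IsLoop e →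
        c K = - c (K.delete e)) →
      c G = 0) :=
  ⟨G.exists_reflTransGen_delStep_isBridge h,
    fun c hbridge hdel => Multigraph.eq_zero_of_deletion_antisymm c hbridge hdel G h⟩
end
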